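/- arXiv:2508.00644 — 3 statements merged into one kernel-verified Lean document; each statement's English description precedes it below -/
import Mathlib

section
/- Let A be an additive category, (X, d) a ℤ-indexed cochain complex in A, and η = (η^n : X^n → X^n) a family of morphisms, not assumed to commute with d, such that η ∘ η = 0 and η ∘ (dη − ηd) = 0 componentwise, where (dη)^n = d^n ∘ η^n and (ηd)^n = η^{n+1} ∘ d^n. Then d + dη − ηd = (1 − η) ∘ d ∘ (1 + η), the family d + dη − ηd is again a differential on X, and 1 + η defines an isomorphism of cochain complexes from (X, d + dη − ηd) to (X, d), with inverse 1 − η. -/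
/-!
If `η ≫ η = 0`, then `1 + η` is invertible with inverse `1 - η`. Expanding
`(1 + η) ≫ d ≫ (1 - η)` gives `d + ηd - dη - ηdη`, and the hypothesis
`(ηd - dη)η = 0` reduces to `ηdη = 0` once `ηη = 0`, so the new differential is the
conjugate of `d` by these isomorphisms. Conjugating a differential gives a differential,
and the conjugating isomorphisms are then an isomorphism of complexes.
-/

open CategoryTheory CategoryTheory.Limits

variable {A : Type*} [Category A] [Preadditive A]

/-- The degreewise maps `(d + dη − ηd)^n : X^n ⟶ X^{n+1}`. -/
def dPrime (X : CochainComplex A ℤ) (η : ∀ n : ℤ, X.X n ⟶ X.X n) (n : ℤ) :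
    X.X n ⟶ X.X (n + 1) :=
  X.d n (n + 1) + η n ≫ X.d n (n + 1) - X.d n (n + 1) ≫ η (n + 1)

namespace CategoryTheory.Preadditive

@[simps]
def oneAddIsoOfCompSelf {X : A} (η : X ⟶ X) (hη : η ≫ η = 0) : X ≅ X where
  hom := 𝟙 X + η
  inv := 𝟙 X - η
  hom_inv_id := by simp [hη]
  inv_hom_id := by simp [hη]

lemma one_add_comp_comp_one_sub {X Y : A} (a : X ⟶ X) (f : X ⟶ Y) (b : Y ⟶ Y)
    (h : a ≫ f ≫ b = 0) : (𝟙 X + a) ≫ f ≫ (𝟙 Y - b) = f + a ≫ f - f ≫ b := by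
  simp only [add_comp, comp_sub, Category.id_comp, Category.comp_id, h]
  abel

end CategoryTheory.Preadditive

open CategoryTheory.Preadditive

lemma dPrime_eq_conj (X : CochainComplex A ℤ) (η : ∀ n : ℤ, X.X n ⟶ X.X n)
    (hη2 : ∀ n : ℤ, η n ≫ η n = 0)
    (hη3 : ∀ n : ℤ, (η n ≫ X.d n (n + 1) - X.d n (n + 1) ≫ η (n + 1)) ≫ η (n + 1) = 0)
    (n : ℤ) :
    dPrime X η n = (𝟙 (X.X n) + η n) ≫ X.d n (n + 1) ≫ (𝟙 (X.X (n + 1)) - η (n + 1)) := by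
  have hηdη : η n ≫ X.d n (n + 1) ≫ η (n + 1) = 0 := by
    simpa only [sub_comp, Category.assoc, hη2, comp_zero, sub_zero] using hη3 n
  rw [one_add_comp_comp_one_sub _ _ _ hηdη, dPrime]

/-- Clean-up Lemma: if `η ∘ η = 0` and `η ∘ (dη − ηd) = 0` componentwise, then
`d + dη − ηd = (1 − η) ∘ d ∘ (1 + η)` is again a differential on `X`, and `1 + η`
defines an isomorphism of cochain complexes from `(X, d + dη − ηd)` to `(X, d)` with
inverse `1 − η`. -/
theorem cleanup_lemma (X : CochainComplex A ℤ) (η : ∀ n : ℤ, X.X n ⟶ X.X n)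
    (hη2 : ∀ n : ℤ, η n ≫ η n = 0)
    (hη3 : ∀ n : ℤ, (η n ≫ X.d n (n + 1) - X.d n (n + 1) ≫ η (n + 1)) ≫ η (n + 1) = 0) :
    (∀ n : ℤ, dPrime X η n =
        (𝟙 (X.X n) + η n) ≫ X.d n (n + 1) ≫ (𝟙 (X.X (n + 1)) - η (n + 1))) ∧
    ∃ hsq : ∀ n : ℤ, dPrime X η n ≫ dPrime X η (n + 1) = 0,
      ∃ φ : (CochainComplex.of (fun n => X.X n) (dPrime X η) hsq) ≅ X,
        (∀ n : ℤ, φ.hom.f n = 𝟙 (X.X n) + η n) ∧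
        (∀ n : ℤ, φ.inv.f n = 𝟙 (X.X n) - η n) := by
  let e n := oneAddIsoOfCompSelf (η n) (hη2 n)
  have hconj n : dPrime X η n = (e n).hom ≫ X.d n (n + 1) ≫ (e (n + 1)).inv :=
    dPrime_eq_conj X η hη2 hη3 n
  have hsq n : dPrime X η n ≫ dPrime X η (n + 1) = 0 := by
    simp [hconj]
  refine ⟨dPrime_eq_conj X η hη2 hη3, hsq,
    HomologicalComplex.Hom.isoOfComponents e ?_, fun _ => rfl, fun _ => rfl⟩
  rintro i _ rfl
  simp [CochainComplex.of_d, hconj]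
end

section
/- In B the following identities hold: G_∘S_• = S_•G_•, G_•S_∘ = S_∘G_∘, G_•D_• = D_•G_• = −D_•D_•, and G_∘D_∘ = D_∘G_∘ = −D_∘D_∘. In particular, G_• commutes with every element of 1_•B1_• and G_∘ commutes with every element of 1_∘B1_∘. -/
/-- Generators of the Bar-Natan algebra: the two vertex idempotents and the four arrows. -/
inductive BNGen : Type
  | eb | ec | db | dc | sb | sc
  deriving DecidableEq

/-- The relations presenting the Bar-Natan algebra as a quotient of the free algebra on
the vertex idempotents and arrows of the quiver: the path-algebra relations for the
two-vertex quiver, together with the four relations `D∘S• = S•D• = D•S∘ = S∘D∘ = 0`. -/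
inductive BNRel (R : Type*) [CommRing R] :
    FreeAlgebra R BNGen → FreeAlgebra R BNGen → Prop
  | idem_b : BNRel R (FreeAlgebra.ι R BNGen.eb * FreeAlgebra.ι R BNGen.eb) (FreeAlgebra.ι R BNGen.eb)
  | idem_c : BNRel R (FreeAlgebra.ι R BNGen.ec * FreeAlgebra.ι R BNGen.ec) (FreeAlgebra.ι R BNGen.ec)
  | orth_bc : BNRel R (FreeAlgebra.ι R BNGen.eb * FreeAlgebra.ι R BNGen.ec) 0
  | orth_cb : BNRel R (FreeAlgebra.ι R BNGen.ec * FreeAlgebra.ι R BNGen.eb) 0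
  | sum_idem : BNRel R (FreeAlgebra.ι R BNGen.eb + FreeAlgebra.ι R BNGen.ec) 1
  | typ_sb : BNRel R (FreeAlgebra.ι R BNGen.ec * FreeAlgebra.ι R BNGen.sb * FreeAlgebra.ι R BNGen.eb) (FreeAlgebra.ι R BNGen.sb)
  | typ_sc : BNRel R (FreeAlgebra.ι R BNGen.eb * FreeAlgebra.ι R BNGen.sc * FreeAlgebra.ι R BNGen.ec) (FreeAlgebra.ι R BNGen.sc)
  | typ_db : BNRel R (FreeAlgebra.ι R BNGen.eb * FreeAlgebra.ι R BNGen.db * FreeAlgebra.ι R BNGen.eb) (FreeAlgebra.ι R BNGen.db)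
  | typ_dc : BNRel R (FreeAlgebra.ι R BNGen.ec * FreeAlgebra.ι R BNGen.dc * FreeAlgebra.ι R BNGen.ec) (FreeAlgebra.ι R BNGen.dc)
  | rel_DcSb : BNRel R (FreeAlgebra.ι R BNGen.dc * FreeAlgebra.ι R BNGen.sb) 0
  | rel_SbDb : BNRel R (FreeAlgebra.ι R BNGen.sb * FreeAlgebra.ι R BNGen.db) 0
  | rel_DbSc : BNRel R (FreeAlgebra.ι R BNGen.db * FreeAlgebra.ι R BNGen.sc) 0
  | rel_ScDc : BNRel R (FreeAlgebra.ι R BNGen.sc * FreeAlgebra.ι R BNGen.dc) 0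

/-- The Bar-Natan algebra `B` over `R`. -/
abbrev BN (R : Type*) [CommRing R] : Type _ := RingQuot (BNRel R)

noncomputable section

/-- The image in `B` of a generator. -/
def BNgen (R : Type*) [CommRing R] (g : BNGen) : BN R :=
  RingQuot.mkAlgHom R (BNRel R) (FreeAlgebra.ι R g)

def eB (R : Type*) [CommRing R] : BN R := BNgen R BNGen.eb
def eC (R : Type*) [CommRing R] : BN R := BNgen R BNGen.ec
def Db (R : Type*) [CommRing R] : BN R := BNgen R BNGen.db
def Dc (R : Type*) [CommRing R] : BN R := BNgen R BNGen.dc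
def Sb (R : Type*) [CommRing R] : BN R := BNgen R BNGen.sb
def Sc (R : Type*) [CommRing R] : BN R := BNgen R BNGen.sc

/-- `SS_• = S_∘ S_•`. -/
def SSb (R : Type*) [CommRing R] : BN R := Sc R * Sb R
/-- `SS_∘ = S_• S_∘`. -/
def SSc (R : Type*) [CommRing R] : BN R := Sb R * Sc R
/-- `G_• = SS_• − D_•`. -/
def Gb (R : Type*) [CommRing R] : BN R := SSb R - Db R
/-- `G_∘ = SS_∘ − D_∘`. -/
def Gc (R : Type*) [CommRing R] : BN R := SSc R - Dc R

end

/-!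
`G := G_• + G_∘` is central in `B`. Indeed `1_• G = G_• = G 1_•` and `1_∘ G = G_∘ = G 1_∘`, so `G`
commutes with the idempotents, and since `S_• = 1_∘ S_• 1_•` we get `G S_• = G_∘ S_•` and
`S_• G = S_• G_•`, so `G` commutes with `S_•` exactly by the identity `G_∘ S_• = S_• G_•`; likewise
for `S_∘`, `D_•`, `D_∘`. Hence `G_• = 1_• G` commutes with every element of the corner `1_• B 1_•`.
-/

section Corner

variable {A : Type*} [Semiring A] {a e f g : A}

theorem mul_right_eq_self_of_mul_mul_eq (he : IsIdempotentElem e) (h : f * a * e = a) :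
    a * e = a := by
  rw [← h, mul_assoc, he.eq]

theorem mul_left_eq_self_of_mul_mul_eq (hf : IsIdempotentElem f) (h : f * a * e = a) :
    f * a = a := by
  rw [← h, ← mul_assoc, ← mul_assoc, hf.eq]

theorem mul_right_eq_zero_of_mul_mul_eq (h : f * a * e = a) (hg : e * g = 0) : a * g = 0 := by
  rw [← h, mul_assoc, hg, mul_zero]

theorem mul_left_eq_zero_of_mul_mul_eq (h : f * a * e = a) (hg : g * f = 0) : g * a = 0 := by
  rw [← h, ← mul_assoc, ← mul_assoc, hg, zero_mul, zero_mul]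

theorem commute_of_mul_mul_eq_mul_mul {t : A} (hfa : f * a = a) (hae : a * e = a)
    (h : t * f * a = a * (e * t)) : Commute t a := by
  calc t * a = t * f * a := by rw [mul_assoc, hfa]
    _ = a * t := by rw [h, ← mul_assoc, hae]

theorem Commute.idempotent_mul_left {t x : A} (he : IsIdempotentElem e)
    (hx : x ∈ Subsemigroup.corner e) (htx : Commute t x) : Commute (e * t) x := by
  obtain ⟨hex, hxe⟩ := (Subsemigroup.mem_corner_iff he).mp hx
  calc e * t * x = e * x * t := by rw [mul_assoc, htx.eq, mul_assoc]
    _ = x * (e * t) := by rw [hex, ← mul_assoc, hxe]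

end Corner

namespace BN

variable (R : Type*) [CommRing R]

theorem adjoin_range_BNgen : Algebra.adjoin R (Set.range (BNgen R)) = ⊤ := by
  rw [show BNgen R = RingQuot.mkAlgHom R (BNRel R) ∘ FreeAlgebra.ι R from rfl, Set.range_comp,
    Algebra.adjoin_image, FreeAlgebra.adjoin_range_ι, Algebra.map_top,
    AlgHom.range_eq_top]
  exact RingQuot.mkAlgHom_surjective R (BNRel R)

theorem commute_of_forall_commute_BNgen {t : BN R} (h : ∀ g, Commute t (BNgen R g)) (x : BN R) :
    Commute t x :=
  Algebra.commute_of_mem_adjoin_of_forall_mem_commute (s := Set.range (BNgen R))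
    (by rw [adjoin_range_BNgen]; trivial)
    (by rintro _ ⟨g, rfl⟩; exact h g)

theorem isIdempotentElem_eB : IsIdempotentElem (eB R) := by
  simpa [IsIdempotentElem, eB, BNgen] using RingQuot.mkAlgHom_rel R BNRel.idem_b
theorem isIdempotentElem_eC : IsIdempotentElem (eC R) := by
  simpa [IsIdempotentElem, eC, BNgen] using RingQuot.mkAlgHom_rel R BNRel.idem_c
theorem eB_mul_eC : eB R * eC R = 0 := by
  simpa [eB, eC, BNgen] using RingQuot.mkAlgHom_rel R BNRel.orth_bc
theorem eC_mul_eB : eC R * eB R = 0 := by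
  simpa [eB, eC, BNgen] using RingQuot.mkAlgHom_rel R BNRel.orth_cb
theorem eC_mul_sb_mul_eB : eC R * Sb R * eB R = Sb R := by
  simpa [eB, eC, Sb, BNgen] using RingQuot.mkAlgHom_rel R BNRel.typ_sb
theorem eB_mul_sc_mul_eC : eB R * Sc R * eC R = Sc R := by
  simpa [eB, eC, Sc, BNgen] using RingQuot.mkAlgHom_rel R BNRel.typ_sc
theorem eB_mul_db_mul_eB : eB R * Db R * eB R = Db R := by
  simpa [eB, Db, BNgen] using RingQuot.mkAlgHom_rel R BNRel.typ_db
theorem eC_mul_dc_mul_eC : eC R * Dc R * eC R = Dc R := by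
  simpa [eC, Dc, BNgen] using RingQuot.mkAlgHom_rel R BNRel.typ_dc
theorem dc_mul_sb : Dc R * Sb R = 0 := by
  simpa [Dc, Sb, BNgen] using RingQuot.mkAlgHom_rel R BNRel.rel_DcSb
theorem sb_mul_db : Sb R * Db R = 0 := by
  simpa [Sb, Db, BNgen] using RingQuot.mkAlgHom_rel R BNRel.rel_SbDb
theorem db_mul_sc : Db R * Sc R = 0 := by
  simpa [Db, Sc, BNgen] using RingQuot.mkAlgHom_rel R BNRel.rel_DbSc
theorem sc_mul_dc : Sc R * Dc R = 0 := by
  simpa [Sc, Dc, BNgen] using RingQuot.mkAlgHom_rel R BNRel.rel_ScDc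

theorem sb_mul_eB : Sb R * eB R = Sb R :=
  mul_right_eq_self_of_mul_mul_eq (isIdempotentElem_eB R) (eC_mul_sb_mul_eB R)
theorem eC_mul_sb : eC R * Sb R = Sb R :=
  mul_left_eq_self_of_mul_mul_eq (isIdempotentElem_eC R) (eC_mul_sb_mul_eB R)
theorem sb_mul_eC : Sb R * eC R = 0 :=
  mul_right_eq_zero_of_mul_mul_eq (eC_mul_sb_mul_eB R) (eB_mul_eC R)
theorem eB_mul_sb : eB R * Sb R = 0 :=
  mul_left_eq_zero_of_mul_mul_eq (eC_mul_sb_mul_eB R) (eB_mul_eC R)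

theorem sc_mul_eC : Sc R * eC R = Sc R :=
  mul_right_eq_self_of_mul_mul_eq (isIdempotentElem_eC R) (eB_mul_sc_mul_eC R)
theorem eB_mul_sc : eB R * Sc R = Sc R :=
  mul_left_eq_self_of_mul_mul_eq (isIdempotentElem_eB R) (eB_mul_sc_mul_eC R)
theorem sc_mul_eB : Sc R * eB R = 0 :=
  mul_right_eq_zero_of_mul_mul_eq (eB_mul_sc_mul_eC R) (eC_mul_eB R)
theorem eC_mul_sc : eC R * Sc R = 0 :=
  mul_left_eq_zero_of_mul_mul_eq (eB_mul_sc_mul_eC R) (eC_mul_eB R)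

theorem db_mul_eB : Db R * eB R = Db R :=
  mul_right_eq_self_of_mul_mul_eq (isIdempotentElem_eB R) (eB_mul_db_mul_eB R)
theorem eB_mul_db : eB R * Db R = Db R :=
  mul_left_eq_self_of_mul_mul_eq (isIdempotentElem_eB R) (eB_mul_db_mul_eB R)
theorem db_mul_eC : Db R * eC R = 0 :=
  mul_right_eq_zero_of_mul_mul_eq (eB_mul_db_mul_eB R) (eB_mul_eC R)
theorem eC_mul_db : eC R * Db R = 0 :=
  mul_left_eq_zero_of_mul_mul_eq (eB_mul_db_mul_eB R) (eC_mul_eB R)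

theorem dc_mul_eC : Dc R * eC R = Dc R :=
  mul_right_eq_self_of_mul_mul_eq (isIdempotentElem_eC R) (eC_mul_dc_mul_eC R)
theorem eC_mul_dc : eC R * Dc R = Dc R :=
  mul_left_eq_self_of_mul_mul_eq (isIdempotentElem_eC R) (eC_mul_dc_mul_eC R)
theorem dc_mul_eB : Dc R * eB R = 0 :=
  mul_right_eq_zero_of_mul_mul_eq (eC_mul_dc_mul_eC R) (eC_mul_eB R)
theorem eB_mul_dc : eB R * Dc R = 0 :=
  mul_left_eq_zero_of_mul_mul_eq (eC_mul_dc_mul_eC R) (eB_mul_eC R)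

theorem gc_mul_sb : Gc R * Sb R = Sb R * Gb R := by
  simp only [Gc, Gb, SSc, SSb, sub_mul, mul_sub, mul_assoc, dc_mul_sb, sb_mul_db]

theorem gb_mul_sc : Gb R * Sc R = Sc R * Gc R := by
  simp only [Gb, Gc, SSb, SSc, sub_mul, mul_sub, mul_assoc, db_mul_sc, sc_mul_dc]

theorem gb_mul_db : Gb R * Db R = -(Db R * Db R) := by
  simp only [Gb, SSb, sub_mul, mul_assoc, sb_mul_db, mul_zero, zero_sub]

theorem db_mul_gb : Db R * Gb R = -(Db R * Db R) := by
  simp only [Gb, SSb, mul_sub, ← mul_assoc, db_mul_sc, zero_mul, zero_sub]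

theorem gc_mul_dc : Gc R * Dc R = -(Dc R * Dc R) := by
  simp only [Gc, SSc, sub_mul, mul_assoc, sc_mul_dc, mul_zero, zero_sub]

theorem dc_mul_gc : Dc R * Gc R = -(Dc R * Dc R) := by
  simp only [Gc, SSc, mul_sub, ← mul_assoc, dc_mul_sb, zero_mul, zero_sub]

noncomputable def G : BN R := Gb R + Gc R

theorem eB_mul_G : eB R * G R = Gb R := by
  simp only [G, Gb, Gc, SSb, SSc, mul_add, mul_sub, ← mul_assoc, eB_mul_sc, eB_mul_db, eB_mul_sb,
    eB_mul_dc, zero_mul, sub_zero, add_zero]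

theorem G_mul_eB : G R * eB R = Gb R := by
  simp only [G, Gb, Gc, SSb, SSc, add_mul, sub_mul, mul_assoc, sb_mul_eB, db_mul_eB, sc_mul_eB,
    dc_mul_eB, mul_zero, sub_zero, add_zero]

theorem eC_mul_G : eC R * G R = Gc R := by
  simp only [G, Gb, Gc, SSb, SSc, mul_add, mul_sub, ← mul_assoc, eC_mul_sb, eC_mul_dc, eC_mul_sc,
    eC_mul_db, zero_mul, sub_zero, zero_add]

theorem G_mul_eC : G R * eC R = Gc R := by
  simp only [G, Gb, Gc, SSb, SSc, add_mul, sub_mul, mul_assoc, sc_mul_eC, dc_mul_eC, sb_mul_eC,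
    db_mul_eC, mul_zero, sub_zero, zero_add]

theorem commute_G (x : BN R) : Commute (G R) x := by
  refine commute_of_forall_commute_BNgen R (fun g => ?_) x
  cases g
  · exact (G_mul_eB R).trans (eB_mul_G R).symm
  · exact (G_mul_eC R).trans (eC_mul_G R).symm
  · exact commute_of_mul_mul_eq_mul_mul (eB_mul_db R) (db_mul_eB R)
      (by rw [G_mul_eB, eB_mul_G]; exact (gb_mul_db R).trans (db_mul_gb R).symm)
  · exact commute_of_mul_mul_eq_mul_mul (eC_mul_dc R) (dc_mul_eC R)
      (by rw [G_mul_eC, eC_mul_G]; exact (gc_mul_dc R).trans (dc_mul_gc R).symm)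
  · exact commute_of_mul_mul_eq_mul_mul (eC_mul_sb R) (sb_mul_eB R)
      (by rw [G_mul_eC, eB_mul_G]; exact gc_mul_sb R)
  · exact commute_of_mul_mul_eq_mul_mul (eB_mul_sc R) (sc_mul_eC R)
      (by rw [G_mul_eB, eC_mul_G]; exact gb_mul_sc R)

end BN

/-- In `B`: `G_∘S_• = S_•G_•`, `G_•S_∘ = S_∘G_∘`, `G_•D_• = D_•G_• = −D_•D_•`,
`G_∘D_∘ = D_∘G_∘ = −D_∘D_∘`; in particular `G_•` commutes with every element of
`1_•B1_•` and `G_∘` commutes with every element of `1_∘B1_∘`. -/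
theorem statement2 (R : Type*) [CommRing R] :
    Gc R * Sb R = Sb R * Gb R ∧
    Gb R * Sc R = Sc R * Gc R ∧
    Gb R * Db R = Db R * Gb R ∧ Db R * Gb R = -(Db R * Db R) ∧
    Gc R * Dc R = Dc R * Gc R ∧ Dc R * Gc R = -(Dc R * Dc R) ∧
    (∀ x : BN R, eB R * x * eB R = x → Gb R * x = x * Gb R) ∧
    (∀ x : BN R, eC R * x * eC R = x → Gc R * x = x * Gc R) := by
  open BN in
  refine ⟨gc_mul_sb R, gb_mul_sc R, (gb_mul_db R).trans (db_mul_gb R).symm, db_mul_gb R,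
    (gc_mul_dc R).trans (dc_mul_gc R).symm, dc_mul_gc R, fun x hx => ?_, fun x hx => ?_⟩
  · rw [← eB_mul_G R]
    exact ((commute_G R x).idempotent_mul_left (isIdempotentElem_eB R) (hx ▸ ⟨x, rfl⟩)).eq
  · rw [← eC_mul_G R]
    exact ((commute_G R x).idempotent_mul_left (isIdempotentElem_eC R) (hx ▸ ⟨x, rfl⟩)).eq
end

section
/- For every integer k ≥ 1, the identity (SS_• + D_•)^k = SS_•^k + D_•^k holds in B; moreover (SS_• + D_•)^k = G_•^k when k is even and (SS_• + D_•)^k = G_•^{k−1}(SS_• + D_•) when k is odd, and the analogous identities hold with ∘ in place of • throughout. -/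
/-!
Both `(SS_•, D_•)` and `(SS_∘, D_∘)` are pairs of mutually orthogonal elements: `SS_• D_• = 0`
because `S_• D_• = 0`, and `D_• SS_• = 0` because `D_• S_∘ = 0` (dually at `∘`). For orthogonal
`x, y` all mixed monomials of length at least two vanish, so `(x + y)^k = x^k + y^k` for `k ≥ 1`,
and `(x + y)^2 = x^2 + y^2 = (x - y)^2`, which gives the even case; the odd case is the even case
multiplied by `x + y`.
-/

theorem pow_mul_eq_zero_of_mul_eq_zero {M : Type*} [MonoidWithZero M] {x y : M} (hxy : x * y = 0)
    {n : ℕ} (hn : n ≠ 0) : x ^ n * y = 0 := by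
  obtain ⟨m, rfl⟩ := Nat.exists_eq_succ_of_ne_zero hn
  rw [pow_succ, mul_assoc, hxy, mul_zero]

theorem add_pow_of_mul_eq_zero {S : Type*} [Semiring S] {x y : S} (hxy : x * y = 0)
    (hyx : y * x = 0) {n : ℕ} (hn : n ≠ 0) : (x + y) ^ n = x ^ n + y ^ n := by
  induction n with
  | zero => exact absurd rfl hn
  | succ n ih =>
    rcases eq_or_ne n 0 with rfl | hn'
    · simp
    rw [pow_succ, ih hn', add_mul, mul_add, mul_add, pow_mul_eq_zero_of_mul_eq_zero hxy hn',
      pow_mul_eq_zero_of_mul_eq_zero hyx hn', ← pow_succ, ← pow_succ, add_zero, zero_add]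

section Orthogonal

variable {A : Type*} [Ring A] {x y : A}

theorem add_sq_eq_sub_sq_of_mul_eq_zero (hxy : x * y = 0) (hyx : y * x = 0) :
    (x + y) ^ 2 = (x - y) ^ 2 := by
  simp only [sq, add_mul, mul_add, sub_mul, mul_sub, hxy, hyx, sub_zero, add_zero, zero_add,
    zero_sub, sub_neg_eq_add]

theorem Even.add_pow_eq_sub_pow_of_mul_eq_zero (hxy : x * y = 0) (hyx : y * x = 0) {n : ℕ}
    (hn : Even n) : (x + y) ^ n = (x - y) ^ n := by
  obtain ⟨m, rfl⟩ := hn.exists_two_nsmul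
  rw [smul_eq_mul, pow_mul, pow_mul, add_sq_eq_sub_sq_of_mul_eq_zero hxy hyx]

theorem Odd.add_pow_eq_sub_pow_pred_mul_of_mul_eq_zero (hxy : x * y = 0) (hyx : y * x = 0)
    {n : ℕ} (hn : Odd n) : (x + y) ^ n = (x - y) ^ (n - 1) * (x + y) := by
  obtain ⟨m, rfl⟩ := hn
  rw [Nat.add_sub_cancel, ← (even_two_mul m).add_pow_eq_sub_pow_of_mul_eq_zero hxy hyx, pow_succ]

theorem add_pow_identities_of_mul_eq_zero (hxy : x * y = 0) (hyx : y * x = 0) {n : ℕ}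
    (hn : 1 ≤ n) :
    (x + y) ^ n = x ^ n + y ^ n ∧
      (Even n → (x + y) ^ n = (x - y) ^ n) ∧
      (Odd n → (x + y) ^ n = (x - y) ^ (n - 1) * (x + y)) :=
  ⟨add_pow_of_mul_eq_zero hxy hyx (Nat.one_le_iff_ne_zero.mp hn),
    fun he => he.add_pow_eq_sub_pow_of_mul_eq_zero hxy hyx,
    fun ho => ho.add_pow_eq_sub_pow_pred_mul_of_mul_eq_zero hxy hyx⟩

end Orthogonal

section BarNatan

variable (R : Type*) [CommRing R]

theorem BNgen_mul_BNgen_eq_zero {a b : BNGen}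
    (h : BNRel R (FreeAlgebra.ι R a * FreeAlgebra.ι R b) 0) : BNgen R a * BNgen R b = 0 := by
  simpa only [BNgen, map_mul, map_zero] using RingQuot.mkAlgHom_rel R h

theorem SSb_mul_Db : SSb R * Db R = 0 := by
  rw [SSb, mul_assoc, Sb, Db, BNgen_mul_BNgen_eq_zero R BNRel.rel_SbDb, mul_zero]

theorem Db_mul_SSb : Db R * SSb R = 0 := by
  rw [SSb, ← mul_assoc, Db, Sc, BNgen_mul_BNgen_eq_zero R BNRel.rel_DbSc, zero_mul]

theorem SSc_mul_Dc : SSc R * Dc R = 0 := by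
  rw [SSc, mul_assoc, Sc, Dc, BNgen_mul_BNgen_eq_zero R BNRel.rel_ScDc, mul_zero]

theorem Dc_mul_SSc : Dc R * SSc R = 0 := by
  rw [SSc, ← mul_assoc, Dc, Sb, BNgen_mul_BNgen_eq_zero R BNRel.rel_DcSb, zero_mul]

end BarNatan

/-- For every `k ≥ 1`, `(SS_• + D_•)^k = SS_•^k + D_•^k` holds in `B`; moreover
`(SS_• + D_•)^k = G_•^k` when `k` is even and `(SS_• + D_•)^k = G_•^{k−1}(SS_• + D_•)`
when `k` is odd; and the analogous identities hold with `∘` in place of `•`. -/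
theorem statement6 (R : Type*) [CommRing R] (k : ℕ) (hk : 1 ≤ k) :
    ((SSb R + Db R) ^ k = SSb R ^ k + Db R ^ k ∧
      (Even k → (SSb R + Db R) ^ k = Gb R ^ k) ∧
      (Odd k → (SSb R + Db R) ^ k = Gb R ^ (k - 1) * (SSb R + Db R))) ∧
    ((SSc R + Dc R) ^ k = SSc R ^ k + Dc R ^ k ∧
      (Even k → (SSc R + Dc R) ^ k = Gc R ^ k) ∧
      (Odd k → (SSc R + Dc R) ^ k = Gc R ^ (k - 1) * (SSc R + Dc R))) :=
  ⟨add_pow_identities_of_mul_eq_zero (SSb_mul_Db R) (Db_mul_SSb R) hk,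
    add_pow_identities_of_mul_eq_zero (SSc_mul_Dc R) (Dc_mul_SSc R) hk⟩
end
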